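/- Let m, n, k be positive integers with m even, n ≥ 2, k ≤ m/2 and k dividing m/2, and let ε, δ, β ≥ 0. Let A be a randomized algorithm mapping each histogram h : {1,…,m} → ℕ to a probability distribution over pairs (c, o), where c ∈ ℕ is the access cost and o is a size-k subset of {1,…,m}, and assume: (i) the induced output algorithm h ↦ (law of o under A(h)) is (ε,δ)-differentially private; (ii) for every histogram h, with probability at least 1−β the output o is (n−2,k)-accurate for h; (iii) for every histogram h, almost surely every pair (c,o) produced by A(h) satisfies: for every i ∈ o, the number of indices j with h[j] > h[i] is strictly less than c (this captures that an algorithm with only sorted access never returns an item it has not seen within its c sorted accesses, under any tie-breaking). Let S = {1,…,m/2}, let S_L be a uniformly random subset of S of cardinality (m/2)/k, let S_H = S ∖ S_L, and define the histogram h_{S_H,S_L} by h_{S_H,S_L}[i] = n for i ∈ S_H, n−1 for i ∈ S_L, and 0 for i ∉ S. Then E_{S_L, A}[ c ] ≥ e^{−ε} · (1 − β − δ − e^{−1}) · (m/2 − m/(2k)), where the expectation is first over the uniform choice of S_L and then over the randomness of A on input h_{S_H,S_L}. -/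

import Mathlib

open scoped ENNReal

/-- The `k`-th largest entry of a histogram `h : Fin m → ℕ` (for `1 ≤ k ≤ m`):
the largest value `v` such that at least `k` entries of `h` are `≥ v`. -/
noncomputable def kthLargest (m : ℕ) (h : Fin m → ℕ) (k : ℕ) : ℕ :=
  sSup {v : ℕ | k ≤ (Finset.univ.filter fun i => v ≤ h i).card}

/-!
Fix a reference set `sL₀`. On the planted histogram of `sL₀` the `k`-th largest value is at
least `n - 1`, so with probability `≥ 1 - β` the output `o` is a `k`-subset of `S`. A uniformly
random `sL ⊆ S` of size `r = |S| / k` misses a fixed `k`-subset of `S` with probability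
`C(|S| - k, r) / C(|S|, r) ≤ (1 - k / |S|) ^ r ≤ e⁻¹`, so `o` meets a random `sL` with probability
`≥ 1 - β - e⁻¹`. All planted histograms are neighbours, so by privacy the output of `A` run on the
histogram of `sL` itself meets `sL` with average probability `≥ e^{-ε} (1 - β - δ - e⁻¹)`. Finally,
an item of `sL` has value `n - 1` and is beaten by the `|S| - |sL|` items of `S \ sL`, so returning
it costs more than `|S| - |sL|` sorted accesses.
-/

open Finset

def IsAccurate (m k : ℕ) (α : ℤ) (h : Fin m → ℕ) (o : Finset (Fin m)) : Prop :=
  ∀ i ∈ o, (kthLargest m h k : ℤ) - α ≤ h i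

def Neighboring {ι : Type*} (h h' : ι → ℕ) : Prop :=
  ∀ i, |(h i : ℤ) - h' i| ≤ 1

def IsDifferentiallyPrivate {ι β : Type*} (ε δ : ℝ) (M : (ι → ℕ) → PMF β) : Prop :=
  ∀ h h', Neighboring h h' → ∀ Z : Set β,
    (M h).toOuterMeasure Z ≤ ENNReal.ofReal (Real.exp ε) * (M h').toOuterMeasure Z +
      ENNReal.ofReal δ

theorem Nat.choose_sub_mul_pow_le (M k r : ℕ) :
    (M - k).choose r * M ^ r ≤ M.choose r * (M - k) ^ r := by
  -- each factor `(M - k - j) / (M - j)` of `C(M - k, r) / C(M, r)` is at most `(M - k) / M`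
  induction r with
  | zero => simp
  | succ r ih =>
    rcases lt_or_ge (M - k) (r + 1) with h | h
    · simp [Nat.choose_eq_zero_of_lt h]
    · have key : M * (M - k - r) ≤ (M - r) * (M - k) := by
        zify [(by omega : k ≤ M), (by omega : r ≤ M), (by omega : r ≤ M - k)]
        nlinarith [Int.natCast_nonneg k, Int.natCast_nonneg r]
      refine Nat.le_of_mul_le_mul_right ?_ r.succ_pos
      calc (M - k).choose (r + 1) * M ^ (r + 1) * (r + 1)
          = ((M - k).choose r * M ^ r) * (M * (M - k - r)) := by
            rw [mul_right_comm, Nat.choose_succ_right_eq]; ring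
        _ ≤ (M.choose r * (M - k) ^ r) * ((M - r) * (M - k)) := Nat.mul_le_mul ih key
        _ = M.choose (r + 1) * (M - k) ^ (r + 1) * (r + 1) := by
            rw [mul_right_comm _ _ (r + 1), Nat.choose_succ_right_eq]; ring

theorem Nat.cast_choose_sub_le_exp_mul_choose {M k : ℕ} (hk : k ≤ M) (r : ℕ) :
    ((M - k).choose r : ℝ) ≤ Real.exp (-(k * r / M)) * M.choose r := by
  rcases M.eq_zero_or_pos with rfl | hM
  · simp [Nat.le_zero.1 hk]
  have hM' : (0 : ℝ) < M := by exact_mod_cast hM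
  have hbase : ((M - k : ℕ) : ℝ) ≤ M * Real.exp (-(k / M)) := by
    rw [Nat.cast_sub hk]
    calc (M : ℝ) - k = M * (-(k / M) + 1) := by field_simp; ring
      _ ≤ M * Real.exp (-(k / M)) := by gcongr; exact Real.add_one_le_exp _
  have hexp : Real.exp (-(k / M : ℝ)) ^ r = Real.exp (-(k * r / M)) := by
    rw [← Real.exp_nat_mul]; ring_nf
  refine le_of_mul_le_mul_right ?_ (pow_pos hM' r)
  calc ((M - k).choose r : ℝ) * M ^ r ≤ M.choose r * ((M - k : ℕ) : ℝ) ^ r := by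
        exact_mod_cast Nat.choose_sub_mul_pow_le M k r
    _ ≤ M.choose r * (M * Real.exp (-(k / M))) ^ r := by gcongr
    _ = Real.exp (-(k * r / M)) * M.choose r * M ^ r := by rw [mul_pow, hexp]; ring

theorem Finset.card_filter_disjoint_powersetCard {α : Type*} [DecidableEq α] {s t : Finset α}
    (ht : t ⊆ s) (r : ℕ) :
    #{u ∈ s.powersetCard r | Disjoint t u} = (#s - #t).choose r := by
  have hfilter : {u ∈ s.powersetCard r | Disjoint t u} = (s \ t).powersetCard r := by
    ext u
    simp only [mem_filter, mem_powersetCard, subset_sdiff, disjoint_comm]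
    tauto
  rw [hfilter, card_powersetCard, card_sdiff_of_subset ht]

theorem Finset.one_sub_exp_neg_one_mul_card_le_card_filter_not_disjoint {α : Type*}
    [DecidableEq α] {s t : Finset α} (ht : t ⊆ s) (hs : 0 < #s) {r : ℕ} (hr : #t * r = #s) :
    (1 - Real.exp (-1)) * #(s.powersetCard r) ≤ #{u ∈ s.powersetCard r | ¬Disjoint t u} := by
  have hsplit : (#{u ∈ s.powersetCard r | Disjoint t u} : ℝ) +
      #{u ∈ s.powersetCard r | ¬Disjoint t u} = #(s.powersetCard r) := by
    exact_mod_cast card_filter_add_card_filter_not (Disjoint t)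
  have hexp : (#t * r / #s : ℝ) = 1 := by
    rw [div_eq_one_iff_eq (by exact_mod_cast hs.ne')]; exact_mod_cast hr
  have hmiss : (#{u ∈ s.powersetCard r | Disjoint t u} : ℝ) ≤
      Real.exp (-1) * #(s.powersetCard r) := by
    rw [card_filter_disjoint_powersetCard ht, card_powersetCard, ← hexp]
    exact Nat.cast_choose_sub_le_exp_mul_choose (card_le_card ht) r
  linarith

namespace PMF

variable {α ι : Type*}

theorem mul_toOuterMeasure_le_tsum_mul (μ : PMF α) (f : α → ℝ≥0∞) {s : Set α} {c : ℝ≥0∞}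
    (hc : ∀ x ∈ s, x ∈ μ.support → c ≤ f x) :
    c * μ.toOuterMeasure s ≤ ∑' x, μ x * f x := by
  rw [toOuterMeasure_apply, ← ENNReal.tsum_mul_left]
  refine ENNReal.tsum_le_tsum fun x => ?_
  by_cases hx : x ∈ s ∧ x ∈ μ.support
  · rw [Set.indicator_of_mem hx.1, mul_comm]
    exact mul_le_mul_right (hc x hx.1 hx.2) _
  · rcases not_and_or.1 hx with hs | hμ
    · simp [Set.indicator_of_notMem hs]
    · simp [(mem_support_iff μ x).not_left.1 hμ]

theorem sum_toOuterMeasure_eq_tsum_mul_card (μ : PMF α) (F : Finset ι) (E : ι → Set α)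
    [∀ x, DecidablePred (x ∈ E ·)] :
    ∑ i ∈ F, μ.toOuterMeasure (E i) = ∑' x, μ x * #{i ∈ F | x ∈ E i} := by
  simp_rw [toOuterMeasure_apply]
  rw [← Summable.tsum_finsetSum fun _ _ => ENNReal.summable]
  congr 1 with x
  simp [Set.indicator_apply, Finset.sum_ite, mul_comm]

theorem ofReal_mul_card_le_sum_toOuterMeasure {ε δ β γ : ℝ} (hδ : 0 ≤ δ) (hβ : 0 ≤ β)
    (hγ : 0 ≤ γ) (μ₀ : PMF α) (μ : ι → PMF α) (F : Finset ι) (E : ι → Set α)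
    [∀ x, DecidablePred (x ∈ E ·)] {s : Set α}
    (hs : ENNReal.ofReal (1 - β) ≤ μ₀.toOuterMeasure s)
    (hcover : ∀ x ∈ s, (1 - γ) * #F ≤ #{i ∈ F | x ∈ E i})
    (hDP : ∀ i ∈ F, μ₀.toOuterMeasure (E i) ≤
      ENNReal.ofReal (Real.exp ε) * (μ i).toOuterMeasure (E i) + ENNReal.ofReal δ) :
    ENNReal.ofReal (Real.exp (-ε) * (1 - β - δ - γ) * #F) ≤
      ∑ i ∈ F, (μ i).toOuterMeasure (E i) := by
  set P := ∑ i ∈ F, (μ i).toOuterMeasure (E i)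
  have hP : P ≠ ⊤ := ENNReal.sum_ne_top.2 fun i _ => by
    rw [toOuterMeasure_apply]; exact tsum_coe_indicator_ne_top _ _
  rcases le_or_gt (1 - β - δ - γ) 0 with htriv | hpos
  · rw [ENNReal.ofReal_of_nonpos <|
      mul_nonpos_of_nonpos_of_nonneg
        (mul_nonpos_of_nonneg_of_nonpos (Real.exp_nonneg _) htriv) (Nat.cast_nonneg _)]
    exact zero_le
  have hβ1 : 0 ≤ 1 - β := by linarith
  have hγ1 : 0 ≤ (1 - γ) * #F := mul_nonneg (by linarith) (Nat.cast_nonneg _)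
  have hcount : ENNReal.ofReal ((1 - γ) * #F) * μ₀.toOuterMeasure s ≤
      ∑ i ∈ F, μ₀.toOuterMeasure (E i) := by
    rw [sum_toOuterMeasure_eq_tsum_mul_card]
    refine μ₀.mul_toOuterMeasure_le_tsum_mul _ fun x hx _ => ?_
    rw [← ENNReal.ofReal_natCast]
    exact ENNReal.ofReal_le_ofReal (hcover x hx)
  have hsum : ∑ i ∈ F, μ₀.toOuterMeasure (E i) ≤
      ENNReal.ofReal (Real.exp ε) * P + #F * ENNReal.ofReal δ := by
    grw [Finset.sum_le_sum hDP, Finset.sum_add_distrib, ← Finset.mul_sum, Finset.sum_const,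
      nsmul_eq_mul]
  have key : (1 - γ) * #F * (1 - β) ≤ Real.exp ε * P.toReal + #F * δ := by
    have := (mul_le_mul_right hs _).trans (hcount.trans hsum)
    rwa [← ENNReal.ofReal_mul hγ1, ← ENNReal.ofReal_natCast, ← ENNReal.ofReal_toReal hP,
      ← ENNReal.ofReal_mul (Real.exp_nonneg _), ← ENNReal.ofReal_mul (Nat.cast_nonneg _),
      ← ENNReal.ofReal_add (by positivity) (by positivity),
      ENNReal.ofReal_le_ofReal_iff (by positivity)] at this
  rw [← ENNReal.ofReal_toReal hP]
  refine ENNReal.ofReal_le_ofReal ?_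
  have hinv : Real.exp (-ε) * Real.exp ε = 1 := by
    rw [← Real.exp_add, neg_add_cancel, Real.exp_zero]
  calc Real.exp (-ε) * (1 - β - δ - γ) * #F
      = Real.exp (-ε) * ((1 - β - δ - γ) * #F) := mul_assoc _ _ _
    _ ≤ Real.exp (-ε) * ((1 - γ) * #F * (1 - β) - #F * δ) := by
        gcongr; nlinarith [mul_nonneg (mul_nonneg hβ hγ) (Nat.cast_nonneg (α := ℝ) #F)]
    _ ≤ Real.exp (-ε) * (Real.exp ε * P.toReal) := by gcongr; linarith
    _ = P.toReal := by rw [← mul_assoc, hinv, one_mul]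

end PMF

theorem le_kthLargest {m k v : ℕ} {h : Fin m → ℕ} (hk : 0 < k) (hv : k ≤ #{i | v ≤ h i}) :
    v ≤ kthLargest m h k := by
  refine le_csSup ⟨univ.sup h, fun w hw => ?_⟩ hv
  obtain ⟨i, hi⟩ := card_pos.1 (hk.trans_le hw)
  exact (mem_filter.1 hi).2.trans (le_sup (mem_univ i))

section Planted

variable {ι : Type*} [DecidableEq ι] {n : ℕ} {S sL : Finset ι} {i : ι}

/-- The paper's `h_{S_H,S_L}` with `S_H = S \ sL`. -/
def planted (n : ℕ) (S sL : Finset ι) (i : ι) : ℕ :=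
  if i ∈ sL then n - 1 else if i ∈ S then n else 0

theorem planted_eq_zero (hsL : sL ⊆ S) (hi : i ∉ S) : planted n S sL i = 0 := by
  have hi' : i ∉ sL := fun h => hi (hsL h)
  simp [planted, hi, hi']

theorem sub_one_le_planted (hi : i ∈ S) : n - 1 ≤ planted n S sL i := by
  unfold planted; split_ifs <;> omega

theorem neighboring_planted {sL' : Finset ι} (hsL : sL ⊆ S) (hsL' : sL' ⊆ S) :
    Neighboring (planted n S sL) (planted n S sL') := by
  intro i
  have h := @hsL i
  have h' := @hsL' i
  rw [abs_le]
  unfold planted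
  split_ifs <;> simp_all <;> omega

variable [Fintype ι]

theorem filter_planted_lt_eq_sdiff (hn : 0 < n) (hi : i ∈ sL) :
    ({j | planted n S sL i < planted n S sL j} : Finset ι) = S \ sL := by
  ext j
  simp only [mem_filter, mem_univ, true_and, mem_sdiff, planted, if_pos hi]
  split_ifs <;> simp_all

theorem mul_toOuterMeasure_not_disjoint_le_tsum {k : ℕ} (hn : 0 < n) (hsL : sL ⊆ S)
    (μ : PMF (ℕ × {o : Finset ι // #o = k}))
    (hseen : ∀ p ∈ μ.support, ∀ i ∈ p.2.val, #{j | planted n S sL i < planted n S sL j} < p.1) :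
    ((#S - #sL : ℕ) : ℝ≥0∞) * μ.toOuterMeasure {p | ¬Disjoint p.2.val sL} ≤
      ∑' p, μ p * p.1 := by
  refine μ.mul_toOuterMeasure_le_tsum_mul _ fun p hp hsupp => ?_
  obtain ⟨i, hio, hisL⟩ := not_disjoint_iff.1 hp
  have hcost := hseen p hsupp i hio
  rw [filter_planted_lt_eq_sdiff hn hisL, card_sdiff_of_subset hsL] at hcost
  exact_mod_cast hcost.le

end Planted

theorem IsAccurate.subset_of_planted {m n k : ℕ} {S sL o : Finset (Fin m)} (hn : 2 ≤ n)
    (hk : 0 < k) (hkS : k ≤ #S) (hsL : sL ⊆ S)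
    (ho : IsAccurate m k (n - 2) (planted n S sL) o) : o ⊆ S := by
  intro i hi
  by_contra hiS
  have hkth : n - 1 ≤ kthLargest m (planted n S sL) k :=
    le_kthLargest hk (hkS.trans (card_le_card fun j hj => by simpa using sub_one_le_planted hj))
  have hacc := ho i hi
  rw [planted_eq_zero hsL hiS] at hacc
  omega

theorem ofReal_mul_card_le_sum_toOuterMeasure_not_disjoint_planted {m n k r : ℕ} {ε δ β : ℝ}
    (hn : 2 ≤ n) (hk : 0 < k) (hδ : 0 ≤ δ) (hβ : 0 ≤ β) {S : Finset (Fin m)} (hkS : k ≤ #S)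
    (hkr : k * r = #S) (A : (Fin m → ℕ) → PMF (ℕ × {o : Finset (Fin m) // #o = k}))
    (hDP : IsDifferentiallyPrivate ε δ fun h => (A h).map Prod.snd)
    (hacc : ∀ h : Fin m → ℕ,
      ENNReal.ofReal (1 - β) ≤ (A h).toOuterMeasure {p | IsAccurate m k (n - 2) h p.2.val}) :
    ENNReal.ofReal (Real.exp (-ε) * (1 - β - δ - Real.exp (-1)) * #(S.powersetCard r)) ≤
      ∑ sL ∈ S.powersetCard r,
        (A (planted n S sL)).toOuterMeasure {p | ¬Disjoint p.2.val sL} := by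
  obtain ⟨sL₀, hsL₀⟩ : (S.powersetCard r).Nonempty :=
    powersetCard_nonempty.2 (hkr ▸ Nat.le_mul_of_pos_left r hk)
  have hsub : ∀ sL ∈ S.powersetCard r, sL ⊆ S := fun sL hsL => (mem_powersetCard.1 hsL).1
  refine PMF.ofReal_mul_card_le_sum_toOuterMeasure hδ hβ (Real.exp_nonneg (-1))
    (A (planted n S sL₀)) _ _ _ (hacc (planted n S sL₀)) (fun p hp => ?_) (fun sL hsL => ?_)
  · exact one_sub_exp_neg_one_mul_card_le_card_filter_not_disjoint
      (hp.subset_of_planted hn hk hkS (hsub sL₀ hsL₀)) (hk.trans_le hkS) (by rw [p.2.2, hkr])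
  · have hdp := hDP (planted n S sL₀) (planted n S sL)
      (neighboring_planted (hsub sL₀ hsL₀) (hsub sL hsL)) {o | ¬Disjoint o.val sL}
    rwa [PMF.toOuterMeasure_map_apply, PMF.toOuterMeasure_map_apply] at hdp

theorem ofReal_mul_card_le_sum_expectedCost_planted {m n k r : ℕ} {ε δ β : ℝ}
    (hn : 2 ≤ n) (hk : 0 < k) (hδ : 0 ≤ δ) (hβ : 0 ≤ β) {S : Finset (Fin m)} (hkS : k ≤ #S)
    (hkr : k * r = #S) (A : (Fin m → ℕ) → PMF (ℕ × {o : Finset (Fin m) // #o = k}))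
    (hDP : IsDifferentiallyPrivate ε δ fun h => (A h).map Prod.snd)
    (hacc : ∀ h : Fin m → ℕ,
      ENNReal.ofReal (1 - β) ≤ (A h).toOuterMeasure {p | IsAccurate m k (n - 2) h p.2.val})
    (hseen : ∀ h : Fin m → ℕ, ∀ p ∈ (A h).support, ∀ i ∈ p.2.val, #{j | h i < h j} < p.1) :
    ENNReal.ofReal (Real.exp (-ε) * (1 - β - δ - Real.exp (-1)) * (#S - r : ℕ)) *
        #(S.powersetCard r) ≤
      ∑ sL ∈ S.powersetCard r, ∑' p, A (planted n S sL) p * (p.1 : ℝ≥0∞) := by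
  calc _ = ((#S - r : ℕ) : ℝ≥0∞) *
        ENNReal.ofReal (Real.exp (-ε) * (1 - β - δ - Real.exp (-1)) * #(S.powersetCard r)) := by
        rw [← ENNReal.ofReal_natCast, ← ENNReal.ofReal_natCast,
          ← ENNReal.ofReal_mul' (Nat.cast_nonneg _), ← ENNReal.ofReal_mul (Nat.cast_nonneg _)]
        ring_nf
    _ ≤ ((#S - r : ℕ) : ℝ≥0∞) * ∑ sL ∈ S.powersetCard r,
          (A (planted n S sL)).toOuterMeasure {p | ¬Disjoint p.2.val sL} := by
        grw [ofReal_mul_card_le_sum_toOuterMeasure_not_disjoint_planted hn hk hδ hβ hkS hkr A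
          hDP hacc]
    _ ≤ _ := by
        rw [mul_sum]
        refine sum_le_sum fun sL hsL => ?_
        rw [← (mem_powersetCard.1 hsL).2]
        exact mul_toOuterMeasure_not_disjoint_le_tsum (by omega) (mem_powersetCard.1 hsL).1 _
          (hseen (planted n S sL))

theorem stmt_14_general (m n k : ℕ) (heven : 2 ∣ m) (hn : 2 ≤ n)
    (hk : 0 < k) (hkm : k ≤ m / 2) (hdvd : k ∣ m / 2)
    (ε δ β : ℝ) (hδ : 0 ≤ δ) (hβ : 0 ≤ β)
    (A : (Fin m → ℕ) → PMF (ℕ × {o : Finset (Fin m) // o.card = k}))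
    (hDP : ∀ h h' : Fin m → ℕ, (∀ i, |(h i : ℤ) - (h' i : ℤ)| ≤ 1) →
      ∀ Z : Set {o : Finset (Fin m) // o.card = k},
        ((A h).map Prod.snd).toOuterMeasure Z ≤
          ENNReal.ofReal (Real.exp ε) * ((A h').map Prod.snd).toOuterMeasure Z +
            ENNReal.ofReal δ)
    (hacc : ∀ h : Fin m → ℕ,
      ENNReal.ofReal (1 - β) ≤
        (A h).toOuterMeasure
          {p | ∀ i ∈ p.2.val,
            (kthLargest m h k : ℤ) - ((n : ℤ) - 2) ≤ (h i : ℤ)})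
    (hseen : ∀ h : Fin m → ℕ, ∀ p ∈ (A h).support, ∀ i ∈ p.2.val,
      (Finset.univ.filter fun j : Fin m => h i < h j).card < p.1) :
    ENNReal.ofReal
        (Real.exp (-ε) * (1 - β - δ - Real.exp (-1)) *
          ((m : ℝ) / 2 - (m : ℝ) / (2 * k))) ≤
      (∑ sL ∈ (Finset.univ.filter fun i : Fin m => (i : ℕ) < m / 2).powersetCard
            ((Finset.univ.filter fun i : Fin m => (i : ℕ) < m / 2).card / k),
          ∑' p : ℕ × {o : Finset (Fin m) // o.card = k},
            A (fun i => if i ∈ sL then n - 1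
                else if i ∈ (Finset.univ.filter fun i : Fin m => (i : ℕ) < m / 2)
                  then n else 0) p * (p.1 : ℝ≥0∞)) /
        (((Finset.univ.filter fun i : Fin m => (i : ℕ) < m / 2).powersetCard
            ((Finset.univ.filter fun i : Fin m => (i : ℕ) < m / 2).card / k)).card
          : ℝ≥0∞) := by
  set S : Finset (Fin m) := {i | (i : ℕ) < m / 2}
  have hS : #S = m / 2 := by simp [S, Fin.card_filter_val_lt, Nat.div_le_self]
  have hN : ((#S - #S / k : ℕ) : ℝ) = m / 2 - m / (2 * k) := by
    rw [hS, Nat.cast_sub (Nat.div_le_self _ _), Nat.cast_div_charZero hdvd,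
      Nat.cast_div_charZero heven, div_div]
    push_cast; ring
  have hF : (#(S.powersetCard (#S / k)) : ℝ≥0∞) ≠ 0 :=
    Nat.cast_ne_zero.2 (card_ne_zero.2 (powersetCard_nonempty.2 (Nat.div_le_self _ _)))
  rw [ENNReal.le_div_iff_mul_le (Or.inl hF) (Or.inl (ENNReal.natCast_ne_top _)), ← hN]
  exact ofReal_mul_card_le_sum_expectedCost_planted hn hk hδ hβ (hS ▸ hkm)
    (Nat.mul_div_cancel' (hS ▸ hdvd)) A hDP hacc hseen

/-- Let `m` be even, `n ≥ 2`, `k ≤ m/2` with `k ∣ m/2`, and let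
`A` map histograms to distributions over pairs `(c, o)` of an access cost and a
size-`k` output set, such that (i) the induced output algorithm is `(ε,δ)`-DP,
(ii) the output is `(n−2,k)`-accurate with probability `≥ 1−β` on every input,
and (iii) almost surely every returned item `i ∈ o` has fewer than `c` indices
with strictly larger histogram value (sorted access sees only the top `c`
entries).  With `S = {1,…,m/2}`, `S_L` a uniformly random subset of `S` of size
`(m/2)/k`, and `h_{S_H,S_L}` equal to `n` on `S ∖ S_L`, `n−1` on `S_L`, `0` off
`S`, the expected access cost satisfies
`E_{S_L,A}[c] ≥ e^{−ε}(1−β−δ−e^{−1})·(m/2 − m/(2k))`. -/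
theorem stmt_14 (m n k : ℕ) (hm : 0 < m) (heven : 2 ∣ m) (hn : 2 ≤ n)
    (hk : 0 < k) (hkm : k ≤ m / 2) (hdvd : k ∣ m / 2)
    (ε δ β : ℝ) (hε : 0 ≤ ε) (hδ : 0 ≤ δ) (hβ : 0 ≤ β)
    (A : (Fin m → ℕ) → PMF (ℕ × {o : Finset (Fin m) // o.card = k}))
    (hDP : ∀ h h' : Fin m → ℕ, (∀ i, |(h i : ℤ) - (h' i : ℤ)| ≤ 1) →
      ∀ Z : Set {o : Finset (Fin m) // o.card = k},
        ((A h).map Prod.snd).toOuterMeasure Z ≤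
          ENNReal.ofReal (Real.exp ε) * ((A h').map Prod.snd).toOuterMeasure Z +
            ENNReal.ofReal δ)
    (hacc : ∀ h : Fin m → ℕ,
      ENNReal.ofReal (1 - β) ≤
        (A h).toOuterMeasure
          {p | ∀ i ∈ p.2.val,
            (kthLargest m h k : ℤ) - ((n : ℤ) - 2) ≤ (h i : ℤ)})
    (hseen : ∀ h : Fin m → ℕ, ∀ p ∈ (A h).support, ∀ i ∈ p.2.val,
      (Finset.univ.filter fun j : Fin m => h i < h j).card < p.1) :
    ENNReal.ofReal
        (Real.exp (-ε) * (1 - β - δ - Real.exp (-1)) *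
          ((m : ℝ) / 2 - (m : ℝ) / (2 * k))) ≤
      (∑ sL ∈ (Finset.univ.filter fun i : Fin m => (i : ℕ) < m / 2).powersetCard
            ((Finset.univ.filter fun i : Fin m => (i : ℕ) < m / 2).card / k),
          ∑' p : ℕ × {o : Finset (Fin m) // o.card = k},
            A (fun i => if i ∈ sL then n - 1
                else if i ∈ (Finset.univ.filter fun i : Fin m => (i : ℕ) < m / 2)
                  then n else 0) p * (p.1 : ℝ≥0∞)) /
        (((Finset.univ.filter fun i : Fin m => (i : ℕ) < m / 2).powersetCard
            ((Finset.univ.filter fun i : Fin m => (i : ℕ) < m / 2).card / k)).card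
          : ℝ≥0∞) :=
  stmt_14_general m n k heven hn hk hkm hdvd ε δ β hδ hβ A hDP hacc hseen
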